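/- arXiv:2407.08006 — 4 statements merged into one kernel-verified Lean document; each statement's English description precedes it below -/
import Mathlib

section
/- Let n ≥ 1 and let H : ℝ^{2n} × [0,∞) → ℝ be such that for each t the map x ↦ H(x,t) is continuously differentiable. Suppose ψ : ℝ^{2n} × [0,∞) → ℂ is differentiable in x and in t and satisfies the Koopman–von Neumann (transport) equation ∂ψ/∂t(x,t) = L_t[ψ(·,t)](x) for all (x,t) ∈ ℝ^{2n} × (0,∞), and suppose ρ₀ : ℝ^{2n} → [0,∞) satisfies |ψ(x,0)|² = ρ₀(x) for all x. Then the function ρ(x,t) := |ψ(x,t)|² satisfies Liouville's equation ∂ρ/∂t(x,t) = L_t[ρ(·,t)](x) for all (x,t) ∈ ℝ^{2n} × (0,∞), together with the initial condition ρ(x,0) = ρ₀(x) for all x ∈ ℝ^{2n}. -/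
/-!
The Liouville operator `L_H[f](x)` is a linear expression in the first-order partial derivatives
of `f` at `x`, so it obeys the chain rule `L_H[g ∘ f](x) = Dg(f x) (L_H[f](x))`. The time
derivative obeys the same chain rule, hence every differentiable observable `g ∘ ψ` of a solution
`ψ` of the transport equation `∂ₜψ = L_H[ψ]` solves it too; the Born density is the case
`g = Complex.normSq`.
-/

open scoped BigOperators

/-- The Liouville operator associated to a classical Hamiltonian `H` on phase space `ℝ^{2n}`:
`L[f](x) = Σ_{j=1}^n ( ∂H/∂x_j(x) · ∂f/∂x_{n+j}(x) − ∂H/∂x_{n+j}(x) · ∂f/∂x_j(x) )`. -/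
noncomputable def liouville {n : ℕ} {E : Type*} [NormedAddCommGroup E] [NormedSpace ℝ E]
    (H : (Fin (2 * n) → ℝ) → ℝ) (f : (Fin (2 * n) → ℝ) → E) (x : Fin (2 * n) → ℝ) : E :=
  ∑ j : Fin n,
    ((fderiv ℝ H x (Pi.single (⟨j.1, by have := j.isLt; omega⟩ : Fin (2 * n)) 1)) •
        fderiv ℝ f x (Pi.single (⟨n + j.1, by have := j.isLt; omega⟩ : Fin (2 * n)) 1) -
      (fderiv ℝ H x (Pi.single (⟨n + j.1, by have := j.isLt; omega⟩ : Fin (2 * n)) 1)) •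
        fderiv ℝ f x (Pi.single (⟨j.1, by have := j.isLt; omega⟩ : Fin (2 * n)) 1))

section Liouville

variable {n : ℕ} {E F : Type*} [NormedAddCommGroup E] [NormedSpace ℝ E]
  [NormedAddCommGroup F] [NormedSpace ℝ F]

theorem liouville_comp (H : (Fin (2 * n) → ℝ) → ℝ) {f : (Fin (2 * n) → ℝ) → E} {g : E → F}
    {x : Fin (2 * n) → ℝ} (hg : DifferentiableAt ℝ g (f x)) (hf : DifferentiableAt ℝ f x) :
    liouville H (fun y => g (f y)) x = fderiv ℝ g (f x) (liouville H f x) := by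
  simp only [liouville, ← Function.comp_def g f, fderiv_comp x hg hf,
    ContinuousLinearMap.comp_apply, map_sum, map_sub, map_smul]

theorem deriv_comp_eq_liouville_comp_of_deriv_eq_liouville (H : (Fin (2 * n) → ℝ) → ℝ)
    {ψ : (Fin (2 * n) → ℝ) → ℝ → E} {g : E → F} {x : Fin (2 * n) → ℝ} {t : ℝ}
    (hg : DifferentiableAt ℝ g (ψ x t)) (hψx : DifferentiableAt ℝ (fun y => ψ y t) x)
    (hψt : DifferentiableAt ℝ (ψ x) t) (hψ : deriv (ψ x) t = liouville H (fun y => ψ y t) x) :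
    deriv (fun s => g (ψ x s)) t = liouville H (fun y => g (ψ y t)) x := by
  rw [liouville_comp H hg hψx, ← hψ, ← fderiv_comp_deriv t hg hψt]
  rfl

end Liouville

theorem Complex.differentiable_normSq : Differentiable ℝ Complex.normSq := by
  rw [show ⇑Complex.normSq = fun z : ℂ => ‖z‖ ^ 2 from funext Complex.normSq_eq_norm_sq]
  exact (contDiff_norm_sq ℝ).differentiable one_ne_zero

theorem kvn_born_density_solves_liouville_general (n : ℕ)
    (H : (Fin (2 * n) → ℝ) → ℝ → ℝ)
    (ψ : (Fin (2 * n) → ℝ) → ℝ → ℂ)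
    (hψx : ∀ (x : Fin (2 * n) → ℝ) (t : ℝ), 0 ≤ t → DifferentiableAt ℝ (fun y => ψ y t) x)
    (hψt : ∀ (x : Fin (2 * n) → ℝ) (t : ℝ), 0 ≤ t → DifferentiableAt ℝ (ψ x) t)
    (hKvN : ∀ (x : Fin (2 * n) → ℝ) (t : ℝ), 0 < t →
      deriv (ψ x) t = liouville (fun y => H y t) (fun y => ψ y t) x)
    (ρ₀ : (Fin (2 * n) → ℝ) → ℝ)
    (hρ₀ : ∀ x, Complex.normSq (ψ x 0) = ρ₀ x) :
    (∀ (x : Fin (2 * n) → ℝ) (t : ℝ), 0 < t →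
        deriv (fun s => Complex.normSq (ψ x s)) t
          = liouville (fun y => H y t) (fun y => Complex.normSq (ψ y t)) x)
    ∧ (∀ x : Fin (2 * n) → ℝ, Complex.normSq (ψ x 0) = ρ₀ x) :=
  ⟨fun x t ht => deriv_comp_eq_liouville_comp_of_deriv_eq_liouville _
      Complex.differentiable_normSq.differentiableAt (hψx x t ht.le) (hψt x t ht.le)
      (hKvN x t ht),
    hρ₀⟩

/-- Koopman–von Neumann: if `ψ` solves the transport (KvN) equation
`∂ψ/∂t = L_t[ψ(·,t)]` with Born density `|ψ(·,0)|² = ρ₀`, then the Born density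
`ρ(x,t) = |ψ(x,t)|²` solves Liouville's equation `∂ρ/∂t = L_t[ρ(·,t)]` with
initial condition `ρ(·,0) = ρ₀`. -/
theorem kvn_born_density_solves_liouville (n : ℕ) (hn : 1 ≤ n)
    (H : (Fin (2 * n) → ℝ) → ℝ → ℝ)
    (hH : ∀ t : ℝ, 0 ≤ t → ContDiff ℝ 1 (fun x => H x t))
    (ψ : (Fin (2 * n) → ℝ) → ℝ → ℂ)
    (hψx : ∀ (x : Fin (2 * n) → ℝ) (t : ℝ), 0 ≤ t → DifferentiableAt ℝ (fun y => ψ y t) x)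
    (hψt : ∀ (x : Fin (2 * n) → ℝ) (t : ℝ), 0 ≤ t → DifferentiableAt ℝ (ψ x) t)
    (hKvN : ∀ (x : Fin (2 * n) → ℝ) (t : ℝ), 0 < t →
      deriv (ψ x) t = liouville (fun y => H y t) (fun y => ψ y t) x)
    (ρ₀ : (Fin (2 * n) → ℝ) → ℝ) (hρ₀nonneg : ∀ x, 0 ≤ ρ₀ x)
    (hρ₀ : ∀ x, Complex.normSq (ψ x 0) = ρ₀ x) :
    (∀ (x : Fin (2 * n) → ℝ) (t : ℝ), 0 < t →
        deriv (fun s => Complex.normSq (ψ x s)) t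
          = liouville (fun y => H y t) (fun y => Complex.normSq (ψ y t)) x)
    ∧ (∀ x : Fin (2 * n) → ℝ, Complex.normSq (ψ x 0) = ρ₀ x) :=
  kvn_born_density_solves_liouville_general n H ψ hψx hψt hKvN ρ₀ hρ₀
end

section
/- Let n ≥ 1 and let H : ℝ^{2n} → ℝ be twice continuously differentiable, and let f : ℝ^{2n} → ℂ be continuously differentiable with compact support. Then the Lebesgue integral of the Liouville operator applied to f vanishes: ∫_{ℝ^{2n}} L[f](x) dx = 0. -/
open scoped BigOperators
open MeasureTheory

/-! Both terms of `∫ (∂ᵥH · ∂_w f - ∂_wH · ∂ᵥf)` integrate by parts to `-∫ ∂_w∂ᵥH · f` (with `v` and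
`w` swapped in the second), and these agree by the symmetry of the second derivative of `H`.
Summing over the canonical pairs `(qⱼ, pⱼ)` of phase space gives the vanishing of `∫ L[f]`. -/

theorem fderiv_fderiv_apply_const {E F : Type*} [NormedAddCommGroup E] [NormedSpace ℝ E]
    [NormedAddCommGroup F] [NormedSpace ℝ F] {H : E → F} {x : E}
    (hH : DifferentiableAt ℝ (fderiv ℝ H) x) (v w : E) :
    fderiv ℝ (fun y ↦ fderiv ℝ H y v) x w = fderiv ℝ (fderiv ℝ H) x w v := by
  rw [fderiv_clm_apply hH (differentiableAt_const v)]
  simp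

section IntegrationByParts

variable {E G : Type*} [NormedAddCommGroup E] [NormedSpace ℝ E] [MeasurableSpace E]
  {μ : Measure E} [NormedAddCommGroup G] [NormedSpace ℝ G]

theorem integrable_smul_fderiv_of_hasCompactSupport [OpensMeasurableSpace E]
    [IsFiniteMeasureOnCompacts μ] {a : E → ℝ} (ha : Continuous a)
    {g : E → G} (hg : ContDiff ℝ 1 g) (hgc : HasCompactSupport g) (v : E) :
    Integrable (fun x ↦ a x • fderiv ℝ g x v) μ :=
  (ha.smul ((hg.continuous_fderiv one_ne_zero).clm_apply continuous_const))
    |>.integrable_of_hasCompactSupport (hgc.fderiv_apply ℝ v).smul_left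

theorem integrable_fderiv_smul_fderiv_of_hasCompactSupport [OpensMeasurableSpace E]
    [IsFiniteMeasureOnCompacts μ] {H : E → ℝ} (hH : ContDiff ℝ 1 H)
    {g : E → G} (hg : ContDiff ℝ 1 g) (hgc : HasCompactSupport g) (v w : E) :
    Integrable (fun x ↦ fderiv ℝ H x v • fderiv ℝ g x w) μ :=
  integrable_smul_fderiv_of_hasCompactSupport
    ((hH.continuous_fderiv one_ne_zero).clm_apply continuous_const) hg hgc w

variable [FiniteDimensional ℝ E] [BorelSpace E] [μ.IsAddHaarMeasure]

theorem integral_smul_fderiv_eq_neg_fderiv_smul_of_hasCompactSupport {a : E → ℝ}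
    (ha : ContDiff ℝ 1 a) {g : E → G} (hg : ContDiff ℝ 1 g) (hgc : HasCompactSupport g)
    (v : E) :
    ∫ x, a x • fderiv ℝ g x v ∂μ = -∫ x, fderiv ℝ a x v • g x ∂μ :=
  integral_smul_fderiv_eq_neg_fderiv_smul_of_integrable
    ((((ha.continuous_fderiv one_ne_zero).clm_apply continuous_const).smul hg.continuous)
      |>.integrable_of_hasCompactSupport hgc.smul_left)
    (integrable_smul_fderiv_of_hasCompactSupport ha.continuous hg hgc v)
    ((ha.continuous.smul hg.continuous).integrable_of_hasCompactSupport hgc.smul_left)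
    (fun x _ ↦ ha.differentiable one_ne_zero x) (fun x _ ↦ hg.differentiable one_ne_zero x)

theorem integral_fderiv_smul_fderiv_eq_neg_fderiv_fderiv_smul {H : E → ℝ} (hH : ContDiff ℝ 2 H)
    {f : E → G} (hf : ContDiff ℝ 1 f) (hfc : HasCompactSupport f) (v w : E) :
    ∫ x, fderiv ℝ H x v • fderiv ℝ f x w ∂μ = -∫ x, fderiv ℝ (fderiv ℝ H) x w v • f x ∂μ := by
  have hH' : ContDiff ℝ 1 (fderiv ℝ H) := hH.fderiv_right one_add_one_eq_two.le
  rw [integral_smul_fderiv_eq_neg_fderiv_smul_of_hasCompactSupport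
    (hH'.clm_apply contDiff_const) hf hfc]
  simp_rw [fderiv_fderiv_apply_const (hH'.differentiable one_ne_zero _)]

theorem integral_fderiv_smul_fderiv_sub_swap_eq_zero {H : E → ℝ} (hH : ContDiff ℝ 2 H)
    {f : E → G} (hf : ContDiff ℝ 1 f) (hfc : HasCompactSupport f) (v w : E) :
    ∫ x, (fderiv ℝ H x v • fderiv ℝ f x w - fderiv ℝ H x w • fderiv ℝ f x v) ∂μ = 0 := by
  have hint := integrable_fderiv_smul_fderiv_of_hasCompactSupport (μ := μ)
    (hH.of_le one_le_two) hf hfc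
  have hsymm : ∀ x, fderiv ℝ (fderiv ℝ H) x w v = fderiv ℝ (fderiv ℝ H) x v w := fun x ↦
    (hH.contDiffAt.isSymmSndFDerivAt (by simp)).eq w v
  rw [integral_sub (hint v w) (hint w v),
    integral_fderiv_smul_fderiv_eq_neg_fderiv_fderiv_smul hH hf hfc,
    integral_fderiv_smul_fderiv_eq_neg_fderiv_fderiv_smul hH hf hfc]
  simp_rw [hsymm, sub_self]

end IntegrationByParts

theorem integral_liouville_eq_zero_general (n : ℕ)
    (H : (Fin (2 * n) → ℝ) → ℝ) (hH : ContDiff ℝ 2 H)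
    (f : (Fin (2 * n) → ℝ) → ℂ)
    (hf : ContDiff ℝ 1 f) (hfc : HasCompactSupport f) :
    ∫ x : Fin (2 * n) → ℝ, liouville H f x = 0 := by
  have hint := integrable_fderiv_smul_fderiv_of_hasCompactSupport (μ := volume)
    (hH.of_le one_le_two) hf hfc
  unfold liouville
  exact (integral_finsetSum _ fun j _ ↦ (hint _ _).sub (hint _ _)).trans
    (Finset.sum_eq_zero fun j _ ↦ integral_fderiv_smul_fderiv_sub_swap_eq_zero hH hf hfc _ _)

/-- For a twice continuously differentiable Hamiltonian and a `C¹` compactly supported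
function `f`, the Lebesgue integral of `L[f]` over phase space vanishes. -/
theorem integral_liouville_eq_zero (n : ℕ) (hn : 1 ≤ n)
    (H : (Fin (2 * n) → ℝ) → ℝ) (hH : ContDiff ℝ 2 H)
    (f : (Fin (2 * n) → ℝ) → ℂ)
    (hf : ContDiff ℝ 1 f) (hfc : HasCompactSupport f) :
    ∫ x : Fin (2 * n) → ℝ, liouville H f x = 0 :=
  integral_liouville_eq_zero_general n H hH f hf hfc
end

section
/- Let a₂, a₃, a₄ be natural numbers and set a = 1 + a₂ + a₃ + a₄. Then for all real numbers x₁, x₂, x₃, x₄, the following polynomial identity holds: x₁ · x₂^{a₂} · x₃^{a₃} · x₄^{a₄} = Σ_{v₂=0}^{a₂} Σ_{v₃=0}^{a₃} Σ_{v₄=0}^{a₄} C(v₂,v₃,v₄) · ( x₁ + (a₂ − 2v₂)·x₂ + (a₃ − 2v₃)·x₃ + (a₄ − 2v₄)·x₄ )^{a}, where C(v₂,v₃,v₄) = ( (−1)^{v₂+v₃+v₄} / (2^{a−1} · a!) ) · binom(a₂,v₂) · binom(a₃,v₃) · binom(a₄,v₄). -/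
/-!
Multiplied by `2^(a-1) a!`, the right-hand side is `a!` times the coefficient of `t^a` in
`∑_v (-1)^(v₂+v₃+v₄) ∏ binom(aᵢ,vᵢ) e^{t(x₁ + ∑ (aᵢ - 2vᵢ) xᵢ)} = e^{t x₁} ∏ (e^{t xᵢ} - e^{-t xᵢ})^aᵢ`.
Since `e^{tz} - e^{-tz} = 2zt (1 + O(t²))`, this product is
`(2t)^(a-1) x₂^a₂ x₃^a₃ x₄^a₄ (1 + x₁ t + O(t²))`, whose coefficient of `t^a` is
`2^(a-1) x₁ x₂^a₂ x₃^a₃ x₄^a₄`.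
-/

open PowerSeries Finset

variable {A : Type*} [CommRing A] [Algebra ℚ A]

lemma rescale_exp_pow (c : A) (k : ℕ) :
    rescale c (exp A) ^ k = rescale (k * c) (exp A) := by
  rw [← map_pow, exp_pow_eq_rescale_exp, rescale_rescale]

variable (A) in
noncomputable def expSubExpNeg (z : A) : A⟦X⟧ := rescale z (exp A) - rescale (-z) (exp A)

lemma sum_neg_one_pow_mul_choose_rescale_exp (m : ℕ) (z : A) :
    ∑ v ∈ range (m + 1), C ((-1) ^ v * m.choose v : A) * rescale ((m - 2 * v) * z) (exp A) =
      expSubExpNeg A z ^ m := by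
  rw [expSubExpNeg, sub_eq_neg_add, add_pow]
  refine sum_congr rfl fun v hv => ?_
  have hvm : v ≤ m := Nat.lt_succ_iff.mp (mem_range.mp hv)
  calc _ = C ((-1) ^ v * m.choose v : A) *
        (rescale (v * -z) (exp A) * rescale ((m - v : ℕ) * z) (exp A)) := by
        rw [exp_mul_exp_eq_exp_add, Nat.cast_sub hvm]; ring_nf
    _ = _ := by
        rw [neg_pow (rescale _ _), rescale_exp_pow, rescale_exp_pow]
        simp only [map_mul, map_pow, map_neg, map_one, map_natCast]
        ring

lemma exists_expSubExpNeg_eq_C_mul_X_mul (z : A) :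
    ∃ V : A⟦X⟧, expSubExpNeg A z = C z * X * V ∧ constantCoeff V = 2 ∧ coeff 1 V = 0 := by
  obtain ⟨U, hU⟩ : X ∣ expSubExpNeg A 1 := by
    rw [X_dvd_iff, ← coeff_zero_eq_constantCoeff_apply, expSubExpNeg, map_sub, coeff_rescale]
    simp
  have hcoeff (n : ℕ) : coeff n U = coeff (n + 1) (expSubExpNeg A 1) := by
    rw [hU, coeff_succ_X_mul]
  refine ⟨rescale z U, ?_, ?_, ?_⟩
  · rw [← rescale_X, ← map_mul, ← hU]
    simp [expSubExpNeg, rescale_rescale]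
  · rw [← coeff_zero_eq_constantCoeff_apply, coeff_rescale, hcoeff, expSubExpNeg]
    norm_num
  · rw [coeff_rescale, hcoeff, expSubExpNeg]
    simp

lemma rescale_exp_mul_expSubExpNeg_pow_eq_sum (a₂ a₃ a₄ : ℕ) (x₁ x₂ x₃ x₄ : A) :
    rescale x₁ (exp A) * expSubExpNeg A x₂ ^ a₂ * expSubExpNeg A x₃ ^ a₃ *
        expSubExpNeg A x₄ ^ a₄ =
      ∑ v₂ ∈ range (a₂ + 1), ∑ v₃ ∈ range (a₃ + 1), ∑ v₄ ∈ range (a₄ + 1),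
        C ((-1) ^ (v₂ + v₃ + v₄) * a₂.choose v₂ * a₃.choose v₃ * a₄.choose v₄ : A) *
          rescale (x₁ + (a₂ - 2 * v₂) * x₂ + (a₃ - 2 * v₃) * x₃ + (a₄ - 2 * v₄) * x₄) (exp A) := by
  rw [← sum_neg_one_pow_mul_choose_rescale_exp, ← sum_neg_one_pow_mul_choose_rescale_exp,
    ← sum_neg_one_pow_mul_choose_rescale_exp, mul_sum (range (a₂ + 1)), sum_mul, sum_mul]
  refine sum_congr rfl fun v₂ _ => ?_
  rw [mul_sum (range (a₃ + 1)), sum_mul]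
  refine sum_congr rfl fun v₃ _ => ?_
  rw [mul_sum]
  refine sum_congr rfl fun v₄ _ => ?_
  simp only [← exp_mul_exp_eq_exp_add, pow_add, map_mul]
  ring

lemma coeff_rescale_exp_mul_expSubExpNeg_pow (a₂ a₃ a₄ : ℕ) (x₁ x₂ x₃ x₄ : A) :
    coeff (1 + a₂ + a₃ + a₄) (rescale x₁ (exp A) * expSubExpNeg A x₂ ^ a₂ *
        expSubExpNeg A x₃ ^ a₃ * expSubExpNeg A x₄ ^ a₄) =
      2 ^ (a₂ + a₃ + a₄) * (x₁ * x₂ ^ a₂ * x₃ ^ a₃ * x₄ ^ a₄) := by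
  obtain ⟨V₂, hV₂, hV₂0, hV₂1⟩ := exists_expSubExpNeg_eq_C_mul_X_mul x₂
  obtain ⟨V₃, hV₃, hV₃0, hV₃1⟩ := exists_expSubExpNeg_eq_C_mul_X_mul x₃
  obtain ⟨V₄, hV₄, hV₄0, hV₄1⟩ := exists_expSubExpNeg_eq_C_mul_X_mul x₄
  have hfactor : rescale x₁ (exp A) * (C x₂ * X * V₂) ^ a₂ * (C x₃ * X * V₃) ^ a₃ *
      (C x₄ * X * V₄) ^ a₄ = X ^ (a₂ + a₃ + a₄) * (C (x₂ ^ a₂ * x₃ ^ a₃ * x₄ ^ a₄) *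
        (rescale x₁ (exp A) * V₂ ^ a₂ * V₃ ^ a₃ * V₄ ^ a₄)) := by
    simp only [map_mul, map_pow]
    ring
  rw [hV₂, hV₃, hV₄, hfactor, show 1 + a₂ + a₃ + a₄ = 1 + (a₂ + a₃ + a₄) by ring,
    coeff_X_pow_mul, coeff_C_mul]
  simp only [coeff_one_mul, coeff_one_pow, coeff_rescale, coeff_exp, map_mul, map_pow, hV₂0, hV₂1, hV₃0, hV₃1, hV₄0, hV₄1]
  norm_num
  ring

/-- Decomposition of the monomial `x₁ · x₂^{a₂} · x₃^{a₃} · x₄^{a₄}` as a signed linear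
combination of `a`-th powers of linear combinations of the variables, where
`a = 1 + a₂ + a₃ + a₄`.  This identity underlies continuous-variable gate synthesis. -/
theorem monomial_power_decomposition (a₂ a₃ a₄ : ℕ) (x₁ x₂ x₃ x₄ : ℝ) :
    x₁ * x₂ ^ a₂ * x₃ ^ a₃ * x₄ ^ a₄ =
      ∑ v₂ ∈ Finset.range (a₂ + 1), ∑ v₃ ∈ Finset.range (a₃ + 1),
        ∑ v₄ ∈ Finset.range (a₄ + 1),
          (((-1 : ℝ) ^ (v₂ + v₃ + v₄) / (2 ^ (1 + a₂ + a₃ + a₄ - 1)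
              * Nat.factorial (1 + a₂ + a₃ + a₄)))
            * (a₂.choose v₂) * (a₃.choose v₃) * (a₄.choose v₄))
          * (x₁ + ((a₂ : ℝ) - 2 * v₂) * x₂ + ((a₃ : ℝ) - 2 * v₃) * x₃
              + ((a₄ : ℝ) - 2 * v₄) * x₄) ^ (1 + a₂ + a₃ + a₄) := by
  have h := congrArg (coeff (1 + a₂ + a₃ + a₄))
    (rescale_exp_mul_expSubExpNeg_pow_eq_sum a₂ a₃ a₄ x₁ x₂ x₃ x₄)
  rw [coeff_rescale_exp_mul_expSubExpNeg_pow] at h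
  simp only [map_sum, coeff_C_mul, coeff_rescale, coeff_exp, map_div₀, map_one, map_natCast] at h
  rw [show 1 + a₂ + a₃ + a₄ - 1 = a₂ + a₃ + a₄ by omega,
    ← mul_right_inj' (pow_ne_zero (a₂ + a₃ + a₄) (two_ne_zero (α := ℝ))), h]
  simp only [mul_sum]
  refine sum_congr rfl fun v₂ _ => sum_congr rfl fun v₃ _ => sum_congr rfl fun v₄ _ => ?_
  field_simp
end

section
/- Let A be an associative unital ℂ-algebra and let p, x, y ∈ A satisfy p·x − x·p = −i·1, p·y = y·p, and x·y = y·x. Let ad_{ipy} denote the map A → A given by ad_{ipy}(B) = (i·p·y)·B − B·(i·p·y). Then for every natural number a, the (terminating) Baker–Campbell–Hausdorff series evaluates exactly: Σ_{k=0}^{a} (1/k!) · ad_{ipy}^k (x^a) = (x + y)^a. (This is the algebraic content of the conjugation identity e^{iP₁X₂} e^{isX₁^a} e^{−iP₁X₂} = e^{is(X₁+X₂)^a} used in the gate decomposition.) -/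
/-!
The map `ad_c = ⁅c, ·⁆` with `c = i·p·y` is a derivation of `A` with `ad_c x = y` and
`ad_c y = 0`. Since `x` and `y` commute, `ad_cᵏ (xᵃ) = a·(a-1)⋯(a-k+1) · yᵏ xᵃ⁻ᵏ`, so dividing
by `k!` leaves the binomial coefficients and the series is the binomial expansion of `(y + x)ᵃ`.
-/

open Nat

namespace Ring

variable {R : Type*} [Ring R]

theorem lie_mul (c u v : R) : ⁅c, u * v⁆ = ⁅c, u⁆ * v + u * ⁅c, v⁆ := by
  simp only [lie_def]
  noncomm_ring

theorem lie_nsmul (c u : R) (n : ℕ) : ⁅c, n • u⁆ = n • ⁅c, u⁆ := by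
  simp only [lie_def, mul_smul_comm, smul_mul_assoc, smul_sub]

theorem lie_pow_of_commute {c x : R} (h : Commute x ⁅c, x⁆) :
    ∀ n : ℕ, ⁅c, x ^ n⁆ = n • (⁅c, x⁆ * x ^ (n - 1))
  | 0 => by simp [lie_def]
  | 1 => by simp
  | n + 2 => by
    rw [pow_succ, lie_mul, lie_pow_of_commute h (n + 1), (h.pow_left (n + 1)).eq,
      smul_mul_assoc, mul_assoc, ← pow_succ, succ_nsmul _ (n + 1)]
    rfl

theorem iterate_lie_pow {c x y : R} (hx : ⁅c, x⁆ = y) (hy : ⁅c, y⁆ = 0) (hxy : Commute x y)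
    (n k : ℕ) : (⁅c, ·⁆)^[k] (x ^ n) = n.descFactorial k • (y ^ k * x ^ (n - k)) := by
  induction k with
  | zero => simp
  | succ k ih =>
    have hyk : ⁅c, y ^ k⁆ = 0 := ((commute_iff_lie_eq.2 hy).pow_right k).lie_eq
    rw [Function.iterate_succ_apply', ih, lie_nsmul, lie_mul, hyk, zero_mul, zero_add,
      lie_pow_of_commute (hx ▸ hxy), hx, mul_smul_comm, ← mul_assoc, ← pow_succ, Nat.sub_sub,
      smul_smul, descFactorial_succ, mul_comm]

end Ring

theorem inv_factorial_smul_descFactorial_nsmul {K M : Type*} [DivisionRing K] [CharZero K]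
    [AddCommGroup M] [Module K M] (n k : ℕ) (z : M) :
    ((k ! : K))⁻¹ • (n.descFactorial k • z) = n.choose k • z := by
  rw [descFactorial_eq_factorial_mul_choose, mul_nsmul', ← Nat.cast_smul_eq_nsmul K (k !),
    inv_smul_smul₀ (by exact_mod_cast k.factorial_ne_zero)]

/-- If `[p,x] = -i`, `[p,y] = 0`, `[x,y] = 0`, then the terminating
Baker–Campbell–Hausdorff series for conjugation of `xᵃ` by `e^{i·p·y}` sums exactly:
`Σ_{k=0}^{a} (1/k!) · ad_{i·p·y}ᵏ (xᵃ) = (x + y)ᵃ`.  This is the algebraic content of the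
identity `e^{iP₁X₂} e^{isX₁ᵃ} e^{−iP₁X₂} = e^{is(X₁+X₂)ᵃ}` used in gate decomposition. -/
theorem bch_series_ipy_pow (A : Type*) [Ring A] [Algebra ℂ A]
    (p x y : A)
    (hpx : p * x - x * p = -(Complex.I • (1 : A)))
    (hpy : p * y = y * p) (hxy : x * y = y * x)
    (a : ℕ) :
    ∑ k ∈ Finset.range (a + 1),
        ((Nat.factorial k : ℂ))⁻¹ •
          (fun B => (Complex.I • (p * y)) * B - B * (Complex.I • (p * y)))^[k] (x ^ a)
      = (x + y) ^ a := by
  have hcx : ⁅Complex.I • (p * y), x⁆ = y := by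
    rw [Ring.lie_def, smul_mul_assoc, mul_smul_comm, ← smul_sub, mul_assoc, ← hxy, ← mul_assoc,
      ← mul_assoc, ← sub_mul, hpx]
    simp [smul_smul]
  have hcy : ⁅Complex.I • (p * y), y⁆ = 0 :=
    ((Commute.mul_left hpy (Commute.refl y)).smul_left Complex.I).lie_eq
  calc _ = ∑ k ∈ Finset.range (a + 1), a.choose k • (y ^ k * x ^ (a - k)) :=
        Finset.sum_congr rfl fun k _ => by
          rw [← inv_factorial_smul_descFactorial_nsmul (K := ℂ),
            ← Ring.iterate_lie_pow hcx hcy hxy]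
          rfl
    _ = (y + x) ^ a := by
      rw [Commute.add_pow' hxy.symm, Finset.Nat.sum_antidiagonal_eq_sum_range_succ
        (fun i j => a.choose i • (y ^ i * x ^ j))]
    _ = (x + y) ^ a := by rw [add_comm]
end
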